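/- arXiv:2112.03216 — 5 statements merged into one kernel-verified Lean document; each statement's English description precedes it below -/
import Mathlib

section
/- For t ∈ (0,1], ε ∈ ℝ, and ε₀ = (1/(2π)) arcsinh(√(t⁻² - 1)), one has ∫₀¹ log|t cos(2π(θ+iε)) - i√(1-t²)| dθ = log((1+√(1-t²))/2) + 2π·max(0, |ε| - ε₀). -/
/-!
With `z = exp (2πi(θ + iε))`, which runs over the circle of radius `r = e^{-2πε}`, one has
`cos (2π(θ + iε)) = (z + z⁻¹)/2`, and the integrand becomes `log |t/2 · (z + z⁻¹ - (a + a⁻¹))|` for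
`a = i(1 + √(1-t²))/t`. Since `z + z⁻¹ - (a + a⁻¹) = z⁻¹ (z - a)(z - a⁻¹)`, the integral is a sum of
circle averages of `log |z - b|`, each equal to `log (max r |b|)` (Jensen). Finally
`log |a| = arsinh √(t⁻² - 1)`.
-/

open Real Filter
open Complex (I)

theorem Real.intervalIntegral_comp_circleMap_two_pi_mul {E : Type*} [NormedAddCommGroup E]
    [NormedSpace ℝ E] (f : ℂ → E) (c : ℂ) (R : ℝ) :
    ∫ θ in (0 : ℝ)..1, f (circleMap c R (2 * π * θ)) = circleAverage f c R := by
  rw [intervalIntegral.integral_comp_mul_left (fun θ ↦ f (circleMap c R θ)) two_pi_pos.ne',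
    mul_zero, mul_one, circleAverage_def]

theorem Complex.cos_two_pi_mul_add_I_mul (θ ε : ℝ) :
    cos (2 * π * (θ + I * ε)) =
      (circleMap 0 (rexp (-(2 * π * ε))) (2 * π * θ)
        + (circleMap 0 (rexp (-(2 * π * ε))) (2 * π * θ))⁻¹) / 2 := by
  have h : circleMap 0 (rexp (-(2 * π * ε))) (2 * π * θ) = exp (2 * π * (θ + I * ε) * I) := by
    rw [circleMap_zero, ofReal_exp, ← exp_add]
    congr 1
    push_cast
    linear_combination (-(2 * π * ε) : ℂ) * I_sq
  rw [h, ← exp_neg, cos, neg_mul]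

theorem Real.log_max_add_log_max_inv_sub_log {r u : ℝ} (hr : 0 < r) (hu : 1 ≤ u) :
    log (max r u) + log (max r u⁻¹) - log r = log u + max 0 (|log r| - log u) := by
  have hu0 : 0 < u := by linarith
  rw [strictMonoOn_log.monotoneOn.map_max hr hu0,
    (strictMonoOn_log.monotoneOn.map_max hr (inv_pos.2 hu0)), log_inv]
  have hL : 0 ≤ log u := log_nonneg hu
  rcases abs_cases (log r) with ⟨h, _⟩ | ⟨h, _⟩ <;> rw [h] <;> simp only [max_def] <;>
    split_ifs <;> linarith

theorem Complex.add_inv_sub_add_inv {z a : ℂ} (hz : z ≠ 0) (ha : a ≠ 0) :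
    z + z⁻¹ - (a + a⁻¹) = z⁻¹ * ((z - a) * (z - a⁻¹)) := by
  field_simp
  ring

theorem Complex.div_two_mul_add_inv_eq_I_mul {t s : ℂ} (ht : t ≠ 0) (hs : 1 + s ≠ 0)
    (h : s ^ 2 + t ^ 2 = 1) :
    t / 2 * (I * ((1 + s) / t) + (I * ((1 + s) / t))⁻¹) = I * s := by
  field_simp
  linear_combination h + (1 - s ^ 2) * Complex.I_sq

theorem Real.circleAverage_log_norm_sub_const_eq_log_max {a : ℂ} {r : ℝ} (hr : 0 < r) :
    circleAverage (fun z ↦ log ‖z - a‖) 0 r = log (max r ‖a‖) := by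
  rw [circleAverage_log_norm_sub_const_eq_log_radius_add_posLog hr.ne', zero_sub, norm_neg,
    posLog_eq_log_max_one (by positivity), ← log_mul hr.ne' (lt_max_of_lt_left one_pos).ne',
    mul_max_of_nonneg _ _ hr.le, mul_one, mul_inv_cancel_left₀ hr.ne']

theorem Real.circleAverage_log_norm_mul_add_inv_sub_add_inv {c a : ℂ} {r : ℝ} (hc : c ≠ 0)
    (ha : a ≠ 0) (hr : 0 < r) :
    circleAverage (fun z ↦ log ‖c * (z + z⁻¹ - (a + a⁻¹))‖) 0 r =
      log ‖c‖ + log (max r ‖a‖) + log (max r ‖a‖⁻¹) - log r := by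
  have hfac : (fun z ↦ log ‖c * (z + z⁻¹ - (a + a⁻¹))‖) =ᶠ[codiscreteWithin (Metric.sphere 0 |r|)]
      fun z ↦ log ‖c‖ + log ‖z - a‖ + log ‖z - a⁻¹‖ - log ‖z - 0‖ := by
    filter_upwards [compl_finite_mem_codiscreteWithin (Set.toFinite {0, a, a⁻¹})] with z hz
    simp only [Set.mem_compl_iff, Set.mem_insert_iff, Set.mem_singleton_iff, not_or] at hz
    obtain ⟨hz0, hza, hza'⟩ := hz
    rw [Complex.add_inv_sub_add_inv hz0 ha, norm_mul, norm_mul, norm_mul, norm_inv, sub_zero,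
      log_mul, log_mul, log_inv, log_mul]
    · ring
    all_goals simp [sub_eq_zero, *]
  have hconst := circleIntegrable_const (log ‖c‖) 0 r
  have hlog (b : ℂ) : CircleIntegrable (fun z ↦ log ‖z - b‖) 0 r :=
    circleIntegrable_log_norm_sub_const r
  have h₁ : CircleIntegrable (fun z ↦ log ‖c‖ + log ‖z - a‖) 0 r := hconst.add (hlog a)
  have h₂ : CircleIntegrable (fun z ↦ log ‖c‖ + log ‖z - a‖ + log ‖z - a⁻¹‖) 0 r :=
    h₁.add (hlog a⁻¹)
  rw [circleAverage_congr_codiscreteWithin hfac hr.ne', circleAverage_fun_sub h₂ (hlog 0),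
    circleAverage_fun_add h₁ (hlog a⁻¹), circleAverage_fun_add hconst (hlog a),
    circleAverage_const,
    circleAverage_log_norm_sub_const_eq_log_max hr, circleAverage_log_norm_sub_const_eq_log_max hr,
    circleAverage_log_norm_sub_const_eq_log_max hr, norm_inv, norm_zero, max_eq_left hr.le]

theorem Real.arsinh_sqrt_inv_sq_sub_one {t : ℝ} (ht0 : 0 < t) (ht1 : t ≤ 1) :
    arsinh √(t⁻¹ ^ 2 - 1) = log ((1 + √(1 - t ^ 2)) / t) := by
  have hs : √(1 - t ^ 2) ^ 2 = 1 - t ^ 2 := sq_sqrt (by nlinarith)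
  have hsqrt : √(t⁻¹ ^ 2 - 1) = √(1 - t ^ 2) / t := by
    rw [← sqrt_sq (by positivity : 0 ≤ √(1 - t ^ 2) / t), div_pow, hs]
    congr 1
    field_simp
  have hsum : 1 + (√(1 - t ^ 2) / t) ^ 2 = t⁻¹ ^ 2 := by
    rw [div_pow, hs]
    field_simp
    ring
  rw [hsqrt, arsinh, hsum, sqrt_sq (by positivity)]
  congr 1
  ring

theorem integral_log_norm_mul_cos_sub_I_mul {t : ℝ} (ht0 : 0 < t) (ht1 : t ≤ 1) (ε : ℝ) :
    ∫ θ in (0 : ℝ)..1, log ‖(t : ℂ) * Complex.cos (2 * π * (θ + I * ε)) - I * √(1 - t ^ 2)‖ =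
      log (t / 2) + log (max (rexp (-(2 * π * ε))) ((1 + √(1 - t ^ 2)) / t))
        + log (max (rexp (-(2 * π * ε))) ((1 + √(1 - t ^ 2)) / t)⁻¹)
        - log (rexp (-(2 * π * ε))) := by
  set s := √(1 - t ^ 2)
  have hs : s ^ 2 + t ^ 2 = 1 := by rw [sq_sqrt (by nlinarith)]; ring
  have hs1 : 0 < 1 + s := by positivity
  set a : ℂ := I * ((1 + s) / t)
  have ha : ‖a‖ = (1 + s) / t := by
    rw [norm_mul, Complex.norm_I, one_mul, ← Complex.ofReal_one, ← Complex.ofReal_add,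
      ← Complex.ofReal_div, Complex.norm_of_nonneg (by positivity)]
  have ha0 : a ≠ 0 := norm_ne_zero_iff.1 (by rw [ha]; positivity)
  have ht2 : (t / 2 : ℂ) ≠ 0 := div_ne_zero (by exact_mod_cast ht0.ne') two_ne_zero
  -- `a` and `a⁻¹` are the roots of `t (z + z⁻¹) / 2 = I s`
  have hroot : (t : ℂ) / 2 * (a + a⁻¹) = I * s :=
    Complex.div_two_mul_add_inv_eq_I_mul (by exact_mod_cast ht0.ne') (by exact_mod_cast hs1.ne')
      (by exact_mod_cast hs)
  have hfactor (θ : ℝ) : (t : ℂ) * Complex.cos (2 * π * (θ + I * ε)) - I * s =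
      t / 2 * (circleMap 0 (rexp (-(2 * π * ε))) (2 * π * θ)
        + (circleMap 0 (rexp (-(2 * π * ε))) (2 * π * θ))⁻¹ - (a + a⁻¹)) := by
    rw [Complex.cos_two_pi_mul_add_I_mul, ← hroot]
    ring
  simp_rw [hfactor]
  rw [intervalIntegral_comp_circleMap_two_pi_mul
      (fun z ↦ log ‖(t / 2 : ℂ) * (z + z⁻¹ - (a + a⁻¹))‖),
    circleAverage_log_norm_mul_add_inv_sub_add_inv ht2 ha0 (exp_pos _), ha,
    ← Complex.ofReal_ofNat, ← Complex.ofReal_div, Complex.norm_of_nonneg (by positivity)]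

theorem log_integral_complexified (t : ℝ) (ht : t ∈ Set.Ioc (0:ℝ) 1) (ε : ℝ) :
    ∫ θ in (0:ℝ)..1,
        Real.log ‖((t : ℂ) * Complex.cos (2 * Real.pi * ((θ : ℂ) + Complex.I * (ε : ℂ)))
          - Complex.I * (Real.sqrt (1 - t ^ 2) : ℂ))‖
      = Real.log ((1 + Real.sqrt (1 - t ^ 2)) / 2)
        + 2 * Real.pi * max 0 (|ε| - (1 / (2 * Real.pi)) * Real.arsinh (Real.sqrt (t⁻¹ ^ 2 - 1))) := by
  obtain ⟨ht0, ht1⟩ := ht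
  set u := (1 + √(1 - t ^ 2)) / t
  have hu : 1 ≤ u := by rw [one_le_div ht0]; linarith [sqrt_nonneg (1 - t ^ 2)]
  rw [integral_log_norm_mul_cos_sub_I_mul ht0 ht1, add_assoc, add_sub_assoc,
    log_max_add_log_max_inv_sub_log (exp_pos _) hu, log_exp, abs_neg,
    arsinh_sqrt_inv_sq_sub_one ht0 ht1]
  have hconst : log (t / 2) + log u = log ((1 + √(1 - t ^ 2)) / 2) := by
    rw [← log_mul (by positivity) (by positivity)]
    congr 1
    simp only [u]
    field_simp
  have hrescale : 2 * π * max 0 (|ε| - 1 / (2 * π) * log u) = max 0 (|2 * π * ε| - log u) := by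
    rw [mul_max_of_nonneg _ _ two_pi_pos.le, mul_zero, abs_mul, abs_of_pos two_pi_pos]
    field_simp
  linarith
end

section
/- For n ∈ ℕ, the n-th power of the matrix B = (1/2)[[2λ', -λ],[-λ, 0]] (with λ ∈ [0,1], λ' = √(1-λ²)) equals (1/2)[[(1+λ')μ₊ⁿ + (1-λ')μ₋ⁿ, -λμ₊ⁿ + λμ₋ⁿ],[-λμ₊ⁿ + λμ₋ⁿ, (1-λ')μ₊ⁿ + (1+λ')μ₋ⁿ]], where μ± = (λ' ± 1)/2. -/
open Matrix

theorem B_pow_formula (lam : ℝ) (hlam : lam ∈ Set.Icc (0:ℝ) 1) (n : ℕ) :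
    ((1 / 2 : ℝ) • (!![2 * Real.sqrt (1 - lam ^ 2), -lam; -lam, 0] : Matrix (Fin 2) (Fin 2) ℝ)) ^ n
      = (1 / 2 : ℝ) •
          !![(1 + Real.sqrt (1 - lam ^ 2)) * ((Real.sqrt (1 - lam ^ 2) + 1) / 2) ^ n
                + (1 - Real.sqrt (1 - lam ^ 2)) * ((Real.sqrt (1 - lam ^ 2) - 1) / 2) ^ n,
              -lam * ((Real.sqrt (1 - lam ^ 2) + 1) / 2) ^ n
                + lam * ((Real.sqrt (1 - lam ^ 2) - 1) / 2) ^ n;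
              -lam * ((Real.sqrt (1 - lam ^ 2) + 1) / 2) ^ n
                + lam * ((Real.sqrt (1 - lam ^ 2) - 1) / 2) ^ n,
              (1 - Real.sqrt (1 - lam ^ 2)) * ((Real.sqrt (1 - lam ^ 2) + 1) / 2) ^ n
                + (1 + Real.sqrt (1 - lam ^ 2)) * ((Real.sqrt (1 - lam ^ 2) - 1) / 2) ^ n] := by

  have h0 : (0:ℝ) ≤ 1 - lam ^ 2 := by
    nlinarith [hlam.1, hlam.2]
  have hs : Real.sqrt (1 - lam ^ 2) ^ 2 = 1 - lam ^ 2 := Real.sq_sqrt h0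
  set s := Real.sqrt (1 - lam ^ 2) with hsdef
  clear_value s
  induction n with
  | zero =>
    ext i j
    fin_cases i <;> fin_cases j <;>
      simp [Matrix.one_apply] <;> ring
  | succ n ih =>
    rw [pow_succ, ih]
    ext i j
    fin_cases i <;> fin_cases j <;>
      simp [Matrix.mul_apply, Fin.sum_univ_two, pow_succ] <;> (first | ring1 | linear_combination (((s + 1) / 2) ^ n - ((s - 1) / 2) ^ n) / 4 * hs)
end

section
/- Let R = [[0,1],[-1,0]] and let A_z(θ) be the UAMO transfer cocycle matrix A_z(θ) = (λ₂cos(2πθ) - iλ₂')⁻¹ [[λ₁⁻¹z⁻¹ + 2λ₁'λ₁⁻¹λ₂ sin(2πθ) + zλ₁'²λ₁⁻¹, -λ₂sin(2πθ) - λ₁'z], [-λ₂sin(2πθ) - λ₁'z, λ₁z]]. Then R⁻¹ A_z(θ)⁻¹ R = -A_z(1/2 - θ), whenever λ₂cos(2πθ) - iλ₂' ≠ 0, λ₁ ∈ (0,1], and z ≠ 0. -/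
open Matrix

/-- The UAMO transfer matrix cocycle. -/
noncomputable def uamoA (lam1 lam2 : ℝ) (z : ℂ) (θ : ℝ) : Matrix (Fin 2) (Fin 2) ℂ :=
  ((lam2 * Real.cos (2 * Real.pi * θ) : ℂ) - Complex.I * (Real.sqrt (1 - lam2 ^ 2) : ℂ))⁻¹ •
    !![(lam1 : ℂ)⁻¹ * z⁻¹
          + 2 * (Real.sqrt (1 - lam1 ^ 2) : ℂ) * (lam1 : ℂ)⁻¹ * (lam2 : ℂ)
              * (Real.sin (2 * Real.pi * θ) : ℂ)
          + z * (Real.sqrt (1 - lam1 ^ 2) : ℂ) ^ 2 * (lam1 : ℂ)⁻¹,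
        -((lam2 : ℂ) * (Real.sin (2 * Real.pi * θ) : ℂ)) - (Real.sqrt (1 - lam1 ^ 2) : ℂ) * z;
        -((lam2 : ℂ) * (Real.sin (2 * Real.pi * θ) : ℂ)) - (Real.sqrt (1 - lam1 ^ 2) : ℂ) * z,
        (lam1 : ℂ) * z]

/-!
Write `A_z(θ) = D(cos 2πθ)⁻¹ • M(sin 2πθ)` with `M` symmetric. For every `2 × 2` matrix,
`R⁻¹ M⁻¹ R = (det M)⁻¹ • Mᵀ`, because conjugation by `R` turns the adjugate into the transpose.
The reflection `θ ↦ 1/2 - θ` fixes `sin 2πθ` and negates `cos 2πθ`, and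
`det M(s) = 1 - λ₂² s² = -D(c) D(-c)` once `s² + c² = 1` and `λ₂'² = 1 - λ₂²`.
-/

namespace Matrix

variable {R K : Type*} [CommRing R] [Field K]

theorem inv_rot_fin_two : (!![0, 1; -1, 0] : Matrix (Fin 2) (Fin 2) R)⁻¹ = !![0, -1; 1, 0] :=
  inv_eq_left_inv (by simp [one_fin_two])

theorem rot_inv_mul_inv_mul_rot (M : Matrix (Fin 2) (Fin 2) R) :
    (!![0, 1; -1, 0] : Matrix (Fin 2) (Fin 2) R)⁻¹ * M⁻¹ * !![0, 1; -1, 0]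
      = Ring.inverse M.det • Mᵀ := by
  rw [inv_rot_fin_two, inv_def, adjugate_fin_two, Matrix.mul_smul, Matrix.smul_mul]
  congr 1
  ext i j
  fin_cases i <;> fin_cases j <;> simp

theorem rot_inv_mul_inv_smul_mul_rot (M : Matrix (Fin 2) (Fin 2) K) {d : K} (hd : d ≠ 0) :
    (!![0, 1; -1, 0] : Matrix (Fin 2) (Fin 2) K)⁻¹ * (d⁻¹ • M)⁻¹ * !![0, 1; -1, 0]
      = (d / M.det) • Mᵀ := by
  rw [rot_inv_mul_inv_mul_rot, Ring.inverse_eq_inv', det_smul, transpose_smul, smul_smul,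
    Fintype.card_fin]
  congr 1
  field_simp

end Matrix

noncomputable def uamoNum (lam1 lam2 : ℝ) (z : ℂ) (s : ℝ) : Matrix (Fin 2) (Fin 2) ℂ :=
  !![(lam1 : ℂ)⁻¹ * z⁻¹ + 2 * (Real.sqrt (1 - lam1 ^ 2) : ℂ) * (lam1 : ℂ)⁻¹ * (lam2 : ℂ) * (s : ℂ)
        + z * (Real.sqrt (1 - lam1 ^ 2) : ℂ) ^ 2 * (lam1 : ℂ)⁻¹,
      -((lam2 : ℂ) * (s : ℂ)) - (Real.sqrt (1 - lam1 ^ 2) : ℂ) * z;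
      -((lam2 : ℂ) * (s : ℂ)) - (Real.sqrt (1 - lam1 ^ 2) : ℂ) * z,
      (lam1 : ℂ) * z]

noncomputable def uamoDen (lam2 c : ℝ) : ℂ :=
  (lam2 * c : ℂ) - Complex.I * (Real.sqrt (1 - lam2 ^ 2) : ℂ)

theorem uamoA_eq_inv_smul (lam1 lam2 : ℝ) (z : ℂ) (θ : ℝ) :
    uamoA lam1 lam2 z θ = (uamoDen lam2 (Real.cos (2 * Real.pi * θ)))⁻¹
      • uamoNum lam1 lam2 z (Real.sin (2 * Real.pi * θ)) :=
  rfl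

theorem transpose_uamoNum (lam1 lam2 : ℝ) (z : ℂ) (s : ℝ) :
    (uamoNum lam1 lam2 z s)ᵀ = uamoNum lam1 lam2 z s := by
  ext i j
  fin_cases i <;> fin_cases j <;> rfl

theorem det_uamoNum {lam1 : ℝ} (h1 : lam1 ≠ 0) (lam2 : ℝ) {z : ℂ} (hz : z ≠ 0) (s : ℝ) :
    (uamoNum lam1 lam2 z s).det = 1 - (lam2 : ℂ) ^ 2 * (s : ℂ) ^ 2 := by
  have hl1 : (lam1 : ℂ) ≠ 0 := by exact_mod_cast h1
  rw [uamoNum, det_fin_two_of]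
  field_simp
  ring

theorem uamoDen_mul_uamoDen_neg {lam2 : ℝ} (h2 : lam2 ^ 2 ≤ 1) (c : ℝ) :
    uamoDen lam2 c * uamoDen lam2 (-c) = -(1 - (lam2 : ℂ) ^ 2 * (1 - (c : ℂ) ^ 2)) := by
  have hsqrt : ((Real.sqrt (1 - lam2 ^ 2) : ℝ) : ℂ) ^ 2 = 1 - (lam2 : ℂ) ^ 2 := by
    exact_mod_cast Real.sq_sqrt (sub_nonneg.mpr h2)
  rw [uamoDen, uamoDen]
  push_cast
  linear_combination (Real.sqrt (1 - lam2 ^ 2) : ℂ) ^ 2 * Complex.I_sq - hsqrt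

theorem uamo_reflection (lam1 lam2 : ℝ) (h1 : lam1 ∈ Set.Ioc (0:ℝ) 1)
    (h2 : lam2 ∈ Set.Icc (0:ℝ) 1) (z : ℂ) (hz : z ≠ 0) (θ : ℝ)
    (hden : (lam2 * Real.cos (2 * Real.pi * θ) : ℂ)
        - Complex.I * (Real.sqrt (1 - lam2 ^ 2) : ℂ) ≠ 0) :
    (!![0, 1; -1, 0] : Matrix (Fin 2) (Fin 2) ℂ)⁻¹ * (uamoA lam1 lam2 z θ)⁻¹
        * (!![0, 1; -1, 0] : Matrix (Fin 2) (Fin 2) ℂ)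
      = -(uamoA lam1 lam2 z (1 / 2 - θ)) := by
  have hreflect : 2 * Real.pi * (1 / 2 - θ) = Real.pi - 2 * Real.pi * θ := by ring
  rw [uamoA_eq_inv_smul, uamoA_eq_inv_smul, hreflect, Real.sin_pi_sub, Real.cos_pi_sub]
  set s := Real.sin (2 * Real.pi * θ)
  set c := Real.cos (2 * Real.pi * θ)
  change uamoDen lam2 c ≠ 0 at hden
  have hdet : (uamoNum lam1 lam2 z s).det = -(uamoDen lam2 c * uamoDen lam2 (-c)) := by
    have hsc : (s : ℂ) ^ 2 + (c : ℂ) ^ 2 = 1 := by exact_mod_cast Real.sin_sq_add_cos_sq _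
    rw [det_uamoNum h1.1.ne' lam2 hz, uamoDen_mul_uamoDen_neg (pow_le_one₀ h2.1 h2.2)]
    linear_combination -(lam2 : ℂ) ^ 2 * hsc
  rw [rot_inv_mul_inv_smul_mul_rot _ hden, transpose_uamoNum, hdet, div_neg,
    div_mul_cancel_left₀ hden, neg_smul]
end

section
/- The matrix X(λ) = [[λ, λ'],[λ', -λ]] (λ ∈ [0,1], λ' = √(1-λ²)) satisfies X = X* = X⁻¹ and tr X = 0, and the UAMO cocycle matrix A_{λ₁,λ₂,z}(θ) satisfies A*X(λ₁)A = X(λ₁) for all θ ∈ ℝ, λ₁ ∈ (0,1], λ₂ ∈ [0,1], and |z| = 1 (whenever A is defined, i.e. λ₂cos(2πθ) - iλ₂' ≠ 0). -/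
open Matrix

/-- The conjugation matrix `X(λ)`. -/
noncomputable def uamoX (lam : ℝ) : Matrix (Fin 2) (Fin 2) ℂ :=
  !![(lam : ℂ), (Real.sqrt (1 - lam ^ 2) : ℂ);
     (Real.sqrt (1 - lam ^ 2) : ℂ), -(lam : ℂ)]

/-!
Write `A = c⁻¹ • B` with `c = λ₂ cos(2πθ) - iλ₂'`. The numerator `B` depends on `λ₂` and `θ` only
through `w = λ₂ sin(2πθ)`, its conjugate transpose is `B` with `z` replaced by `z̄ = z⁻¹`, and a
direct computation using `λ₁² + λ₁'² = 1` gives `B* X(λ₁) B = (1 - w²) X(λ₁)`. Since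
`|c|² = λ₂² cos²(2πθ) + 1 - λ₂² = 1 - w²`, the scalar factors cancel.
-/

lemma ofReal_sq_eq_one_sub_sqrt_sq {lam : ℝ} (h : lam ^ 2 ≤ 1) :
    (lam : ℂ) ^ 2 = 1 - (Real.sqrt (1 - lam ^ 2) : ℂ) ^ 2 := by
  rw [← Complex.ofReal_pow, ← Complex.ofReal_pow, Real.sq_sqrt (by linarith)]
  push_cast
  ring

lemma conjTranspose_uamoX (lam : ℝ) : (uamoX lam)ᴴ = uamoX lam := by
  ext i j; fin_cases i <;> fin_cases j <;> simp [uamoX]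

lemma uamoX_mul_self {lam : ℝ} (h : lam ^ 2 ≤ 1) : uamoX lam * uamoX lam = 1 := by
  rw [uamoX, mul_fin_two, one_fin_two]
  congr 1
  have hs := ofReal_sq_eq_one_sub_sqrt_sq h
  refine vec2_eq (vec2_eq ?_ ?_) (vec2_eq ?_ ?_)
  · linear_combination hs
  · ring
  · ring
  · linear_combination hs

lemma trace_uamoX (lam : ℝ) : (uamoX lam).trace = 0 := by
  simp [uamoX, trace_fin_two]

noncomputable def uamoNumerator (lam w : ℝ) (z : ℂ) : Matrix (Fin 2) (Fin 2) ℂ :=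
  !![(lam : ℂ)⁻¹ * (z⁻¹ + 2 * (Real.sqrt (1 - lam ^ 2) : ℂ) * w
        + (Real.sqrt (1 - lam ^ 2) : ℂ) ^ 2 * z),
      -(w + (Real.sqrt (1 - lam ^ 2) : ℂ) * z);
     -(w + (Real.sqrt (1 - lam ^ 2) : ℂ) * z), lam * z]

lemma uamoA_eq_inv_smul_uamoNumerator (lam1 lam2 : ℝ) (z : ℂ) (θ : ℝ) :
    uamoA lam1 lam2 z θ =
      ((lam2 * Real.cos (2 * Real.pi * θ) : ℂ) - Complex.I * (Real.sqrt (1 - lam2 ^ 2) : ℂ))⁻¹ •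
        uamoNumerator lam1 (lam2 * Real.sin (2 * Real.pi * θ)) z := by
  rw [uamoA, uamoNumerator]
  congr 2
  refine vec2_eq (vec2_eq ?_ ?_) (vec2_eq ?_ ?_) <;> push_cast <;> ring

lemma conjTranspose_uamoNumerator (lam w : ℝ) (z : ℂ) :
    (uamoNumerator lam w z)ᴴ = uamoNumerator lam w (star z) := by
  ext i j; fin_cases i <;> fin_cases j <;> simp [uamoNumerator]

lemma uamoNumerator_inv_mul_uamoX_mul_uamoNumerator {lam : ℝ} (hlam : lam ≠ 0)
    (h : lam ^ 2 ≤ 1) (w : ℝ) {z : ℂ} (hz : z ≠ 0) :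
    uamoNumerator lam w z⁻¹ * uamoX lam * uamoNumerator lam w z
      = (1 - (w : ℂ) ^ 2) • uamoX lam := by
  have hlam' : (lam : ℂ) ≠ 0 := by exact_mod_cast hlam
  rw [uamoX, uamoNumerator, uamoNumerator, mul_fin_two, mul_fin_two, smul_of]
  simp only [smul_cons, smul_empty, smul_eq_mul, inv_inv]
  congr 1
  refine vec2_eq (vec2_eq ?_ ?_) (vec2_eq ?_ ?_) <;> field_simp <;>
    simp only [ofReal_sq_eq_one_sub_sqrt_sq h] <;> ring

lemma star_mul_self_cos_sub_I_sqrt {lam : ℝ} (h : lam ^ 2 ≤ 1) (t : ℝ) :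
    star ((lam * Real.cos t : ℂ) - Complex.I * (Real.sqrt (1 - lam ^ 2) : ℂ)) *
        ((lam * Real.cos t : ℂ) - Complex.I * (Real.sqrt (1 - lam ^ 2) : ℂ))
      = 1 - ((lam * Real.sin t : ℝ) : ℂ) ^ 2 := by
  have hcs : (Real.sin t : ℂ) ^ 2 + (Real.cos t : ℂ) ^ 2 = 1 := by
    exact_mod_cast Real.sin_sq_add_cos_sq t
  rw [Complex.star_def, map_sub, map_mul, map_mul, Complex.conj_ofReal, Complex.conj_ofReal,
    Complex.conj_ofReal, Complex.conj_I, Complex.ofReal_mul]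
  linear_combination ofReal_sq_eq_one_sub_sqrt_sq h
    - (Real.sqrt (1 - lam ^ 2) : ℂ) ^ 2 * Complex.I_sq + (lam : ℂ) ^ 2 * hcs

lemma conjTranspose_inv_smul_mul_mul_inv_smul {n K : Type*} [Fintype n] [Field K] [StarRing K]
    {c : K} (hc : c ≠ 0) {M X : Matrix n n K} (h : Mᴴ * X * M = (star c * c) • X) :
    (c⁻¹ • M)ᴴ * X * (c⁻¹ • M) = X := by
  rw [conjTranspose_smul, smul_mul, smul_mul, Matrix.mul_smul, h, smul_smul, smul_smul, star_inv₀,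
    ← mul_inv, inv_mul_cancel₀ (mul_ne_zero (star_ne_zero.2 hc) hc), one_smul]

theorem uamoX_conjugation (lam : ℝ) (hlam : lam ∈ Set.Icc (0:ℝ) 1) :
    uamoX lam = (uamoX lam)ᴴ
    ∧ uamoX lam * uamoX lam = 1
    ∧ (uamoX lam).trace = 0
    ∧ ∀ (lam1 lam2 : ℝ), lam1 ∈ Set.Ioc (0:ℝ) 1 → lam2 ∈ Set.Icc (0:ℝ) 1 →
        ∀ (z : ℂ), ‖z‖ = 1 → ∀ (θ : ℝ),
        (lam2 * Real.cos (2 * Real.pi * θ) : ℂ)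
            - Complex.I * (Real.sqrt (1 - lam2 ^ 2) : ℂ) ≠ 0 →
        (uamoA lam1 lam2 z θ)ᴴ * uamoX lam1 * uamoA lam1 lam2 z θ = uamoX lam1 := by
  refine ⟨(conjTranspose_uamoX lam).symm, uamoX_mul_self (pow_le_one₀ hlam.1 hlam.2),
    trace_uamoX lam, ?_⟩
  rintro lam1 lam2 ⟨hlam1_pos, hlam1_le⟩ ⟨hlam2_nonneg, hlam2_le⟩ z hz θ hc
  have hz0 : z ≠ 0 := norm_ne_zero_iff.1 (by simp [hz])
  have hstar_z : star z = z⁻¹ := (Complex.inv_eq_conj hz).symm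
  rw [uamoA_eq_inv_smul_uamoNumerator]
  refine conjTranspose_inv_smul_mul_mul_inv_smul hc ?_
  rw [conjTranspose_uamoNumerator, hstar_z,
    uamoNumerator_inv_mul_uamoX_mul_uamoNumerator hlam1_pos.ne' (pow_le_one₀ hlam1_pos.le hlam1_le)
      _ hz0,
    star_mul_self_cos_sub_I_sqrt (pow_le_one₀ hlam2_nonneg hlam2_le)]
end

section
/- For λ₂ ∈ (0,1) and θ ∈ ℝ, the complex number d(θ) = (λ₂cos(2πθ) + iλ₂')/(λ₂cos(2πθ) - iλ₂') (with λ₂' = √(1-λ₂²)) is unimodular and has argument arg(d(θ)) ∈ [2 arctan(λ₂'/λ₂), 2π - 2 arctan(λ₂'/λ₂)]; in particular d(θ) ≠ 1 for all θ. -/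
/-!
Write `w = λ₂ cos(2πθ) + i λ₂'`, so that `d(θ) = w / w̄ = exp(2i arg w)`. Since `Im w = λ₂' > 0` and
`λ₂² + λ₂'² = 1`, one has `|Re w| ≤ λ₂ |w|`, hence `cos (arg w) ∈ [-λ₂, λ₂]` and
`arg w ∈ [arccos λ₂, π - arccos λ₂]`, where `arccos λ₂ = arctan (λ₂' / λ₂)`. Finally `d(θ) = 1` would
force `w = w̄`, i.e. `Im w = 0`.
-/

open Complex ComplexConjugate Real

namespace Complex

theorem div_conj_eq_exp_two_mul_arg {w : ℂ} (hw : w ≠ 0) :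
    w / conj w = exp (I * ↑(2 * arg w)) := by
  have hpolar := norm_mul_exp_arg_mul_I w
  have hconj : conj w = ‖w‖ * exp (-(arg w * I)) := by
    conv_lhs => rw [← hpolar]
    rw [map_mul, conj_ofReal, ← exp_conj, map_mul, conj_ofReal, conj_I, mul_neg]
  have hnorm : (‖w‖ : ℂ) ≠ 0 := by exact_mod_cast norm_ne_zero_iff.2 hw
  rw [hconj]
  nth_rewrite 1 [← hpolar]
  rw [mul_div_mul_left _ _ hnorm, ← exp_sub]
  congr 1
  push_cast
  ring

theorem div_conj_ne_one {w : ℂ} (hw : w.im ≠ 0) : w / conj w ≠ 1 := by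
  have hw0 : conj w ≠ 0 := by
    rw [map_ne_zero]; rintro rfl; exact hw rfl
  rw [Ne, div_eq_one_iff_eq hw0, eq_comm, conj_eq_iff_im]
  exact hw

theorem arg_mem_Icc_arccos {w : ℂ} {l : ℝ} (him : 0 < w.im) (hre : |w.re| ≤ l * ‖w‖) :
    arg w ∈ Set.Icc (arccos l) (π - arccos l) := by
  have hnorm : 0 < ‖w‖ := norm_pos_iff.2 fun h ↦ by simp [h] at him
  have hcos : |w.re / ‖w‖| ≤ l := by
    rw [abs_div, abs_norm, div_le_iff₀ hnorm]; exact hre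
  rw [arg_of_im_pos him, ← arccos_neg]
  exact ⟨antitone_arccos (abs_le.1 hcos).2, antitone_arccos (abs_le.1 hcos).1⟩

theorem abs_re_le_mul_norm {w : ℂ} {l : ℝ} (hl : 0 ≤ l) (hre : |w.re| ≤ l)
    (him : w.im ^ 2 = 1 - l ^ 2) : |w.re| ≤ l * ‖w‖ := by
  refine abs_le_of_sq_le_sq ?_ (by positivity)
  have hre2 : w.re ^ 2 ≤ l ^ 2 := sq_le_sq' (abs_le.1 hre).1 (abs_le.1 hre).2
  have hgap : 0 ≤ (l ^ 2 - w.re ^ 2) * w.im ^ 2 := mul_nonneg (sub_nonneg.2 hre2) (sq_nonneg _)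
  rw [mul_pow, Complex.sq_norm, normSq_apply, ← sq, ← sq]
  rw [him] at hgap ⊢
  linarith

end Complex

theorem det_range_avoids_one (lam2 : ℝ) (hlam : lam2 ∈ Set.Ioo (0:ℝ) 1) (θ : ℝ) :
    ‖((lam2 * Real.cos (2 * Real.pi * θ) : ℂ)
          + Complex.I * (Real.sqrt (1 - lam2 ^ 2) : ℂ))
        / ((lam2 * Real.cos (2 * Real.pi * θ) : ℂ)
          - Complex.I * (Real.sqrt (1 - lam2 ^ 2) : ℂ))‖ = 1
    ∧ (∃ s : ℝ, 2 * Real.arctan (Real.sqrt (1 - lam2 ^ 2) / lam2) ≤ s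
        ∧ s ≤ 2 * Real.pi - 2 * Real.arctan (Real.sqrt (1 - lam2 ^ 2) / lam2)
        ∧ ((lam2 * Real.cos (2 * Real.pi * θ) : ℂ)
              + Complex.I * (Real.sqrt (1 - lam2 ^ 2) : ℂ))
            / ((lam2 * Real.cos (2 * Real.pi * θ) : ℂ)
              - Complex.I * (Real.sqrt (1 - lam2 ^ 2) : ℂ))
          = Complex.exp (Complex.I * (s : ℂ)))
    ∧ ((lam2 * Real.cos (2 * Real.pi * θ) : ℂ)
          + Complex.I * (Real.sqrt (1 - lam2 ^ 2) : ℂ))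
        / ((lam2 * Real.cos (2 * Real.pi * θ) : ℂ)
          - Complex.I * (Real.sqrt (1 - lam2 ^ 2) : ℂ)) ≠ 1 := by
  obtain ⟨hl0, hl1⟩ := hlam
  set c := Real.cos (2 * π * θ)
  set l' := √(1 - lam2 ^ 2)
  set w : ℂ := (lam2 * c : ℂ) + I * l'
  have hre : w.re = lam2 * c := by simp [w]
  have him : w.im = l' := by simp [w]
  have hl' : 0 < l' := Real.sqrt_pos.2 (by nlinarith)
  have hconj : (lam2 * c : ℂ) - I * l' = conj w := by simp [w, sub_eq_add_neg]
  have hw0 : w ≠ 0 := fun h ↦ by simp [h] at him; linarith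
  have hre_le : |w.re| ≤ lam2 := by
    rw [hre, abs_mul, abs_of_pos hl0]
    exact mul_le_of_le_one_right hl0.le (abs_cos_le_one _)
  have harg := arg_mem_Icc_arccos (him ▸ hl') (abs_re_le_mul_norm hl0.le hre_le
    (by rw [him, sq_sqrt (by nlinarith)]))
  rw [hconj, ← arccos_eq_arctan hl0]
  refine ⟨?_, ⟨2 * arg w, by linarith [harg.1], by linarith [harg.2],
    div_conj_eq_exp_two_mul_arg hw0⟩, div_conj_ne_one (him ▸ hl'.ne')⟩
  rw [div_conj_eq_exp_two_mul_arg hw0]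
  exact norm_exp_I_mul_ofReal _
end
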